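/- arXiv:2010.05860 — 3 statements merged into one kernel-verified Lean document; each statement's English description precedes it below -/
import Mathlib

section
/- Let H : [0,∞) → ℝ be continuous and suppose there exist constants C ≥ 0 and λ > 0 such that |H(t)| ≤ C·e^(−λt) for all t ≥ 0. If ∫₀^∞ t^k · H(t) dt = 0 for every integer k ≥ 0, then H(t) = 0 for all t ≥ 0. -/
/-!
Split `H = H⁺ - H⁻` and consider the finite measures `H⁺(t) dt` and `H⁻(t) dt` on `(0, ∞)`.
The exponential bound makes their moment generating functions finite on `(-∞, λ)`, so the
complex extensions are holomorphic on the strip `Re z < λ`. Their Taylor coefficients at `0`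
are the moments, which agree because the moments of `H` vanish; by the identity theorem the
two extensions agree on the whole strip, in particular on the imaginary axis, where they are
the characteristic functions. Hence `H⁺ dt = H⁻ dt`, so `H = 0` almost everywhere on `(0, ∞)`,
and everywhere on `[0, ∞)` by continuity.
-/

open MeasureTheory Set ProbabilityTheory
open scoped ENNReal

open Complex in
theorem MeasureTheory.Measure.ext_of_integral_pow_eq {μ ν : Measure ℝ}
    [IsFiniteMeasure μ] [IsFiniteMeasure ν]
    (hμ : 0 ∈ interior (integrableExpSet id μ)) (hν : 0 ∈ interior (integrableExpSet id ν))
    (h : ∀ n : ℕ, ∫ x, x ^ n ∂μ = ∫ x, x ^ n ∂ν) : μ = ν := by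
  set S := {z : ℂ | z.re ∈ interior (integrableExpSet id μ) ∩ interior (integrableExpSet id ν)}
  have hS_open : IsOpen S := (isOpen_interior.inter isOpen_interior).preimage continuous_re
  have hS_conn : IsPreconnected S :=
    ((convex_integrableExpSet.interior.inter convex_integrableExpSet.interior).linear_preimage
      reLm).isPreconnected
  have hmem (t : ℝ) : (t * I : ℂ) ∈ S := by simp [S, hμ, hν]
  have h0 : (0 : ℂ) ∈ S := by simpa using hmem 0
  have hf : AnalyticOnNhd ℂ (complexMGF id μ) S := analyticOnNhd_complexMGF.mono fun z hz => hz.1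
  have hg : AnalyticOnNhd ℂ (complexMGF id ν) S := analyticOnNhd_complexMGF.mono fun z hz => hz.2
  have hderiv (n : ℕ) :
      iteratedDeriv n (complexMGF id μ) 0 = iteratedDeriv n (complexMGF id ν) 0 := by
    rw [iteratedDeriv_complexMGF (by simpa using hμ), iteratedDeriv_complexMGF (by simpa using hν)]
    simp only [zero_mul, Complex.exp_zero, mul_one, id, ← ofReal_pow]
    rw [integral_complex_ofReal, integral_complex_ofReal, h n]
  obtain ⟨r, hr, hball⟩ := Metric.isOpen_iff.1 hS_open 0 h0
  have hnear : complexMGF id μ =ᶠ[nhds 0] complexMGF id ν := by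
    filter_upwards [Metric.ball_mem_nhds 0 hr] with z hz
    rw [← taylorSeries_eq_on_ball' hz (hf.differentiableOn.mono hball),
      ← taylorSeries_eq_on_ball' hz (hg.differentiableOn.mono hball)]
    simp only [hderiv]
  refine Measure.ext_of_charFun (funext fun t => ?_)
  rw [← complexMGF_id_mul_I, ← complexMGF_id_mul_I]
  exact hf.eqOn_of_preconnected_of_eventuallyEq hg hS_conn h0 hnear (hmem t)

lemma ContinuousOn.eqOn_Ici_of_ae_eq_zero {f : ℝ → ℝ} {a : ℝ} (hf : ContinuousOn f (Ici a))
    (h : f =ᵐ[volume.restrict (Ioi a)] 0) : EqOn f 0 (Ici a) :=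
  (Measure.eqOn_open_of_ae_eq h isOpen_Ioi (hf.mono Ioi_subset_Ici_self)
    continuousOn_const).of_subset_closure hf continuousOn_const Ioi_subset_Ici_self
    (closure_Ioi a).ge

noncomputable def posPartMeasure (f : ℝ → ℝ) : Measure ℝ :=
  (volume.restrict (Ioi 0)).withDensity fun t => ((f t).toNNReal : ℝ≥0∞)

section posPartMeasure

variable {f : ℝ → ℝ} (hf : AEStronglyMeasurable f (volume.restrict (Ioi 0)))
include hf

lemma integral_posPartMeasure (g : ℝ → ℝ) :
    ∫ t, g t ∂posPartMeasure f = ∫ t in Ioi 0, max (f t) 0 * g t := by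
  rw [posPartMeasure, integral_withDensity_eq_integral_smul₀ hf.aemeasurable.real_toNNReal]
  simp only [NNReal.smul_def, Real.coe_toNNReal', smul_eq_mul]

lemma integrable_posPartMeasure_iff (g : ℝ → ℝ) :
    Integrable g (posPartMeasure f) ↔ IntegrableOn (fun t => max (f t) 0 * g t) (Ioi 0) := by
  rw [posPartMeasure, integrable_withDensity_iff_integrable_smul₀ hf.aemeasurable.real_toNNReal]
  simp only [NNReal.smul_def, Real.coe_toNNReal', smul_eq_mul, IntegrableOn]

lemma ae_eq_zero_of_posPartMeasure_eq (h : posPartMeasure f = posPartMeasure (-f)) :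
    f =ᵐ[volume.restrict (Ioi 0)] 0 := by
  rw [posPartMeasure, posPartMeasure, withDensity_eq_iff_of_sigmaFinite
    hf.aemeasurable.real_toNNReal.coe_nnreal_ennreal
    hf.neg.aemeasurable.real_toNNReal.coe_nnreal_ennreal] at h
  filter_upwards [h] with t ht
  have := congrArg NNReal.toReal (ENNReal.coe_injective ht)
  simp only [Pi.neg_apply, Real.coe_toNNReal'] at this
  simpa [this] using (max_zero_sub_max_neg_zero_eq_self (f t)).symm

variable {C lam : ℝ} (hbound : ∀ t : ℝ, 0 ≤ t → |f t| ≤ C * Real.exp (-lam * t))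
include hbound

lemma integrable_exp_mul_posPartMeasure {s : ℝ} (hs : s < lam) :
    Integrable (fun t => Real.exp (s * t)) (posPartMeasure f) := by
  rw [integrable_posPartMeasure_iff hf]
  refine Integrable.mono' ((exp_neg_integrableOn_Ioi 0 (sub_pos.2 hs)).const_mul C)
    ((hf.sup aestronglyMeasurable_const).mul (by fun_prop)) ?_
  refine (ae_restrict_iff' measurableSet_Ioi).2 (Filter.Eventually.of_forall fun t ht => ?_)
  have hft : max (f t) 0 ≤ C * Real.exp (-lam * t) :=
    (max_le (le_abs_self _) (abs_nonneg _)).trans (hbound t (le_of_lt ht))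
  rw [norm_mul, Real.norm_of_nonneg (le_max_right _ _), Real.norm_of_nonneg (Real.exp_pos _).le]
  calc max (f t) 0 * Real.exp (s * t) ≤ C * Real.exp (-lam * t) * Real.exp (s * t) := by gcongr
    _ = C * Real.exp (-(lam - s) * t) := by rw [mul_assoc, ← Real.exp_add]; ring_nf

lemma isFiniteMeasure_posPartMeasure (hlam : 0 < lam) : IsFiniteMeasure (posPartMeasure f) :=
  (integrable_const_iff_isFiniteMeasure one_ne_zero).1 <| by
    simpa using integrable_exp_mul_posPartMeasure hf hbound hlam

lemma zero_mem_interior_integrableExpSet_posPartMeasure (hlam : 0 < lam) :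
    0 ∈ interior (integrableExpSet id (posPartMeasure f)) :=
  mem_interior_iff_mem_nhds.2 <| Filter.mem_of_superset (Iio_mem_nhds hlam)
    fun _ hs => integrable_exp_mul_posPartMeasure hf hbound hs

lemma integrableOn_posPart_mul_pow (hlam : 0 < lam) (n : ℕ) :
    IntegrableOn (fun t => max (f t) 0 * t ^ n) (Ioi 0) :=
  (integrable_posPartMeasure_iff hf _).1 <| integrable_pow_of_mem_interior_integrableExpSet
    (zero_mem_interior_integrableExpSet_posPartMeasure hf hbound hlam) n

end posPartMeasure

theorem vanishing_moments_implies_zero_general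
    (H : ℝ → ℝ) (hcont : ContinuousOn H (Set.Ici 0))
    (C lam : ℝ) (hlam : 0 < lam)
    (hbound : ∀ t : ℝ, 0 ≤ t → |H t| ≤ C * Real.exp (-lam * t))
    (hmom : ∀ k : ℕ, ∫ t in Set.Ioi (0 : ℝ), t ^ k * H t = 0) :
    ∀ t : ℝ, 0 ≤ t → H t = 0 := by
  have hH : AEStronglyMeasurable H (volume.restrict (Ioi 0)) :=
    (hcont.mono Ioi_subset_Ici_self).aestronglyMeasurable measurableSet_Ioi
  have hbound_neg : ∀ t : ℝ, 0 ≤ t → |(-H) t| ≤ C * Real.exp (-lam * t) := by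
    simpa only [Pi.neg_apply, abs_neg] using hbound
  have := isFiniteMeasure_posPartMeasure hH hbound hlam
  have := isFiniteMeasure_posPartMeasure hH.neg hbound_neg hlam
  have hmoments (n : ℕ) : ∫ t, t ^ n ∂posPartMeasure H = ∫ t, t ^ n ∂posPartMeasure (-H) := by
    rw [← sub_eq_zero, integral_posPartMeasure hH, integral_posPartMeasure hH.neg,
      ← integral_sub (integrableOn_posPart_mul_pow hH hbound hlam n)
        (integrableOn_posPart_mul_pow hH.neg hbound_neg hlam n)]
    simp only [Pi.neg_apply, ← sub_mul, max_zero_sub_max_neg_zero_eq_self]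
    simpa only [mul_comm] using hmom n
  have hμ := Measure.ext_of_integral_pow_eq
    (zero_mem_interior_integrableExpSet_posPartMeasure hH hbound hlam)
    (zero_mem_interior_integrableExpSet_posPartMeasure hH.neg hbound_neg hlam) hmoments
  exact fun t ht => hcont.eqOn_Ici_of_ae_eq_zero (ae_eq_zero_of_posPartMeasure_eq hH hμ) ht

/-- If `H : [0,∞) → ℝ` is continuous, decays exponentially (`|H t| ≤ C e^{-λ t}`),
and all its moments `∫₀^∞ t^k H(t) dt` vanish, then `H ≡ 0` on `[0,∞)`. -/
theorem vanishing_moments_implies_zero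
    (H : ℝ → ℝ) (hcont : ContinuousOn H (Set.Ici 0))
    (C lam : ℝ) (hC : 0 ≤ C) (hlam : 0 < lam)
    (hbound : ∀ t : ℝ, 0 ≤ t → |H t| ≤ C * Real.exp (-lam * t))
    (hmom : ∀ k : ℕ, ∫ t in Set.Ioi (0 : ℝ), t ^ k * H t = 0) :
    ∀ t : ℝ, 0 ≤ t → H t = 0 :=
  vanishing_moments_implies_zero_general H hcont C lam hlam hbound hmom
end

section
/- Let f, g : (0,∞) → ℝ be continuous, nonnegative functions such that ∫₀^∞ e^(−st) f(t) dt < ∞ and ∫₀^∞ e^(−st) g(t) dt < ∞ for every s > 0. If the self-convolutions agree, i.e. ∫₀^t f(τ)·f(t−τ) dτ = ∫₀^t g(τ)·g(t−τ) dτ for every t > 0, then f(t) = g(t) for all t > 0. -/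
/-!
The Laplace transform turns the self-convolutions into the squares `(Lf)²` and `(Lg)²`, so by
nonnegativity `Lf = Lg` on `(0, ∞)`. For `c > 0` the finite measures `e^{-ct} f(t) dt` and
`e^{-ct} g(t) dt` on `(0, ∞)` then have the same moment generating function near `0`; by analytic
continuation their characteristic functions agree, so the measures coincide. Hence `f = g` almost
everywhere on `(0, ∞)`, and everywhere there by continuity.
-/

open MeasureTheory Set ProbabilityTheory Filter Topology

-- The complex mgfs are analytic on the strip `a < re z < b` and agree on its real points, hence
-- also on the imaginary axis, where they are the characteristic functions.
theorem MeasureTheory.Measure.ext_of_mgf_eqOn {μ ν : Measure ℝ} [IsFiniteMeasure μ]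
    [IsFiniteMeasure ν] {a b : ℝ} (hab : 0 ∈ Ioo a b)
    (hμ : Ioo a b ⊆ integrableExpSet id μ) (hν : Ioo a b ⊆ integrableExpSet id ν)
    (h : EqOn (mgf id μ) (mgf id ν) (Ioo a b)) : μ = ν := by
  set U : Set ℂ := {z | z.re ∈ Ioo a b}
  have hU : IsPreconnected U :=
    ((convex_Ioo a b).linear_preimage Complex.reLm).isPreconnected
  have hstrip {ρ : Measure ℝ} (hρ : Ioo a b ⊆ integrableExpSet id ρ) :
      AnalyticOnNhd ℂ (complexMGF id ρ) U :=
    analyticOnNhd_complexMGF.mono fun _ hz ↦ interior_maximal hρ isOpen_Ioo hz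
  have hreal : ∃ᶠ x : ℝ in 𝓝[≠] 0, complexMGF id μ x = complexMGF id ν x := by
    refine (eventually_nhdsWithin_of_eventually_nhds (Ioo_mem_nhds hab.1 hab.2)).frequently.mono
      fun x hx ↦ ?_
    rw [complexMGF_ofReal, complexMGF_ofReal, h hx]
  have hofReal : Tendsto ((↑) : ℝ → ℂ) (𝓝[≠] 0) (𝓝[≠] 0) :=
    tendsto_nhdsWithin_of_tendsto_nhds_of_eventually_within _
      ((Complex.continuous_ofReal.tendsto' 0 0 (by simp)).mono_left nhdsWithin_le_nhds)
      (by simp [eventually_nhdsWithin_iff])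
  have hEq := (hstrip hμ).eqOn_of_preconnected_of_frequently_eq (hstrip hν) hU
    (z₀ := 0) (by simpa [U] using hab) (hofReal.frequently hreal)
  refine Measure.ext_of_charFun (funext fun t ↦ ?_)
  rw [← complexMGF_id_mul_I, ← complexMGF_id_mul_I]
  exact hEq (by simpa [U] using hab)

noncomputable def laplaceTransform (f : ℝ → ℝ) (s : ℝ) : ℝ :=
  ∫ t in Ioi 0, Real.exp (-s * t) * f t

theorem laplaceTransform_congr {f g : ℝ → ℝ} (h : EqOn f g (Ioi 0)) (s : ℝ) :
    laplaceTransform f s = laplaceTransform g s :=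
  setIntegral_congr_fun measurableSet_Ioi fun t ht ↦ by rw [h ht]

theorem laplaceTransform_nonneg {f : ℝ → ℝ} (hf : ∀ t, 0 < t → 0 ≤ f t) (s : ℝ) :
    0 ≤ laplaceTransform f s :=
  setIntegral_nonneg measurableSet_Ioi fun t ht ↦ mul_nonneg (Real.exp_pos _).le (hf t ht)

theorem laplaceTransform_convolution {f g : ℝ → ℝ} {s : ℝ}
    (hf : IntegrableOn (fun t ↦ Real.exp (-s * t) * f t) (Ioi 0))
    (hg : IntegrableOn (fun t ↦ Real.exp (-s * t) * g t) (Ioi 0)) :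
    laplaceTransform (fun x ↦ ∫ τ in Ioo 0 x, f τ * g (x - τ)) s =
      laplaceTransform f s * laplaceTransform g s := by
  have hprod := integral_posConvolution hf hg (ContinuousLinearMap.mul ℝ ℝ)
  simp only [ContinuousLinearMap.mul_apply'] at hprod
  rw [laplaceTransform, laplaceTransform, laplaceTransform, ← hprod]
  refine setIntegral_congr_fun measurableSet_Ioi fun x hx ↦ ?_
  rw [intervalIntegral.integral_of_le (le_of_lt hx), integral_Ioc_eq_integral_Ioo,
    ← integral_const_mul]
  refine setIntegral_congr_fun measurableSet_Ioo fun τ _ ↦ ?_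
  have hexp : Real.exp (-s * x) = Real.exp (-s * τ) * Real.exp (-s * (x - τ)) := by
    rw [← Real.exp_add]; ring_nf
  rw [hexp]
  ring

-- Its moment generating function is `u ↦ laplaceTransform f (c - u)` (`mgf_laplaceMeasure`).
noncomputable def laplaceMeasure (f : ℝ → ℝ) (c : ℝ) : Measure ℝ :=
  (volume.restrict (Ioi 0)).withDensity fun t ↦ ENNReal.ofReal (Real.exp (-c * t) * f t)

section laplaceMeasure

variable {f : ℝ → ℝ} {c : ℝ}

theorem isFiniteMeasure_laplaceMeasure
    (hc : IntegrableOn (fun t ↦ Real.exp (-c * t) * f t) (Ioi 0)) :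
    IsFiniteMeasure (laplaceMeasure f c) :=
  isFiniteMeasure_withDensity_ofReal hc.hasFiniteIntegral

theorem ae_toReal_density_smul_exp_eq (hf : ∀ t, 0 < t → 0 ≤ f t) (u : ℝ) :
    ∀ᵐ t ∂volume.restrict (Ioi 0),
      (ENNReal.ofReal (Real.exp (-c * t) * f t)).toReal • Real.exp (u * id t) =
        Real.exp (-(c - u) * t) * f t := by
  filter_upwards [ae_restrict_mem measurableSet_Ioi] with t ht
  rw [ENNReal.toReal_ofReal (mul_nonneg (Real.exp_pos _).le (hf t ht)), smul_eq_mul, id,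
    show -(c - u) * t = -c * t + u * t by ring, Real.exp_add]
  ring

theorem integrable_exp_laplaceMeasure (hf : ∀ t, 0 < t → 0 ≤ f t)
    (hc : IntegrableOn (fun t ↦ Real.exp (-c * t) * f t) (Ioi 0)) {u : ℝ}
    (hu : IntegrableOn (fun t ↦ Real.exp (-(c - u) * t) * f t) (Ioi 0)) :
    u ∈ integrableExpSet id (laplaceMeasure f c) := by
  rw [integrableExpSet, mem_ofPred_eq, laplaceMeasure,
    integrable_withDensity_iff_integrable_smul₀' hc.aemeasurable.ennreal_ofReal
      (ae_of_all _ fun _ ↦ ENNReal.ofReal_lt_top),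
    integrable_congr (ae_toReal_density_smul_exp_eq hf u)]
  exact hu

theorem mgf_laplaceMeasure (hf : ∀ t, 0 < t → 0 ≤ f t)
    (hc : IntegrableOn (fun t ↦ Real.exp (-c * t) * f t) (Ioi 0)) (u : ℝ) :
    mgf id (laplaceMeasure f c) u = laplaceTransform f (c - u) := by
  rw [mgf, laplaceMeasure, integral_withDensity_eq_integral_toReal_smul₀
      hc.aemeasurable.ennreal_ofReal (ae_of_all _ fun _ ↦ ENNReal.ofReal_lt_top),
    integral_congr_ae (ae_toReal_density_smul_exp_eq hf u), laplaceTransform]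

end laplaceMeasure

theorem ae_eq_of_laplaceTransform_eqOn {f g : ℝ → ℝ} {S : Set ℝ} (hS : IsOpen S)
    (hS₀ : S.Nonempty) (hf : ∀ t, 0 < t → 0 ≤ f t) (hg : ∀ t, 0 < t → 0 ≤ g t)
    (hfint : ∀ s ∈ S, IntegrableOn (fun t ↦ Real.exp (-s * t) * f t) (Ioi 0))
    (hgint : ∀ s ∈ S, IntegrableOn (fun t ↦ Real.exp (-s * t) * g t) (Ioi 0))
    (h : EqOn (laplaceTransform f) (laplaceTransform g) S) :
    f =ᵐ[volume.restrict (Ioi 0)] g := by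
  obtain ⟨c, hc⟩ := hS₀
  obtain ⟨ε, hε, hball⟩ := Metric.isOpen_iff.1 hS c hc
  have hshift : ∀ u ∈ Ioo (-ε) ε, c - u ∈ S := fun u hu ↦ hball <| by
    rwa [Metric.mem_ball, Real.dist_eq, sub_sub_cancel_left, abs_neg, abs_lt]
  have := isFiniteMeasure_laplaceMeasure (hfint c hc)
  have := isFiniteMeasure_laplaceMeasure (hgint c hc)
  have hμ : laplaceMeasure f c = laplaceMeasure g c := by
    refine Measure.ext_of_mgf_eqOn ⟨neg_lt_zero.2 hε, hε⟩
      (fun u hu ↦ integrable_exp_laplaceMeasure hf (hfint c hc) (hfint _ (hshift u hu)))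
      (fun u hu ↦ integrable_exp_laplaceMeasure hg (hgint c hc) (hgint _ (hshift u hu)))
      fun u hu ↦ ?_
    rw [mgf_laplaceMeasure hf (hfint c hc), mgf_laplaceMeasure hg (hgint c hc), h (hshift u hu)]
  have hdensity := (withDensity_eq_iff_of_sigmaFinite (hfint c hc).aemeasurable.ennreal_ofReal
    (hgint c hc).aemeasurable.ennreal_ofReal).1 hμ
  filter_upwards [hdensity, ae_restrict_mem measurableSet_Ioi] with t ht ht0
  rw [ENNReal.ofReal_eq_ofReal_iff (mul_nonneg (Real.exp_pos _).le (hf t ht0))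
    (mul_nonneg (Real.exp_pos _).le (hg t ht0))] at ht
  exact mul_left_cancel₀ (Real.exp_pos _).ne' ht

/-- Two continuous nonnegative functions on `(0,∞)`, each with convergent Laplace
transform for all `s > 0`, whose self-convolutions agree, must be equal. -/
theorem selfconvolution_determines_function
    (f g : ℝ → ℝ)
    (hfcont : ContinuousOn f (Set.Ioi 0)) (hgcont : ContinuousOn g (Set.Ioi 0))
    (hfpos : ∀ t : ℝ, 0 < t → 0 ≤ f t) (hgpos : ∀ t : ℝ, 0 < t → 0 ≤ g t)
    (hfint : ∀ s : ℝ, 0 < s →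
      IntegrableOn (fun t : ℝ => Real.exp (-s * t) * f t) (Set.Ioi 0) volume)
    (hgint : ∀ s : ℝ, 0 < s →
      IntegrableOn (fun t : ℝ => Real.exp (-s * t) * g t) (Set.Ioi 0) volume)
    (hconv : ∀ t : ℝ, 0 < t →
      (∫ τ in Set.Ioo (0 : ℝ) t, f τ * f (t - τ))
        = ∫ τ in Set.Ioo (0 : ℝ) t, g τ * g (t - τ)) :
    ∀ t : ℝ, 0 < t → f t = g t := by
  have hsq : ∀ s, 0 < s →
      laplaceTransform f s * laplaceTransform f s = laplaceTransform g s * laplaceTransform g s := by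
    intro s hs
    rw [← laplaceTransform_convolution (hfint s hs) (hfint s hs),
      ← laplaceTransform_convolution (hgint s hs) (hgint s hs)]
    exact laplaceTransform_congr hconv s
  have hlaplace : EqOn (laplaceTransform f) (laplaceTransform g) (Ioi 0) := fun s hs ↦
    (mul_self_inj (laplaceTransform_nonneg hfpos s) (laplaceTransform_nonneg hgpos s)).1
      (hsq s hs)
  have hae := ae_eq_of_laplaceTransform_eqOn isOpen_Ioi nonempty_Ioi hfpos hgpos hfint hgint
    hlaplace
  exact fun t ht ↦ Measure.eqOn_open_of_ae_eq hae isOpen_Ioi hfcont hgcont ht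
end

section
/- Let Y be a nonempty set and F : (0,∞) × Y → ℝ a function such that for each y ∈ Y the function t ↦ F(t,y) is continuous and nonnegative on (0,∞) and satisfies ∫₀^∞ e^(−st) F(t,y) dt < ∞ for every s > 0. Suppose there exists a function γ : (0,∞) → ℝ such that ∫₀^t F(τ,y)·F(t−τ,y) dτ = γ(t) for every t > 0 and every y ∈ Y. Then F(t,y₁) = F(t,y₂) for all t > 0 and all y₁, y₂ ∈ Y. -/
/-!
Extend each `F(·, y)` by zero to `t ≤ 0` and view it as an `ℝ≥0∞`-valued function `f_y`. By
Tonelli, the Laplace transform of `f_y ⋆ f_y` is the square of that of `f_y`. Since the Laplace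
transform at `s = 1` is finite, `f_y ⋆ f_y` is finite almost everywhere, and wherever it is finite
it equals `γ`; so the self-convolutions at `y₁` and `y₂` agree a.e., and hence so do the Laplace
transforms of `F(·, y₁)` and `F(·, y₂)`, being nonnegative square roots of the same quantity.
Finally the Laplace transform is injective on continuous functions: the substitution `x = e^{-t}`
turns its value at `s = n + 1` into the `n`-th moment of a function on `[0, 1]`, and by the
Weierstrass approximation theorem a function with vanishing moments vanishes a.e.
-/

open MeasureTheory Set Real
open scoped ENNReal

theorem MeasureTheory.lintegral_lconvolution {G : Type*} [MeasurableSpace G] [AddGroup G]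
    [MeasurableAdd₂ G] [MeasurableNeg G] {μ : Measure G} [μ.IsAddLeftInvariant] [SFinite μ]
    {f g : G → ℝ≥0∞} (hf : AEMeasurable f μ) (hg : AEMeasurable g μ) :
    ∫⁻ x, (f ⋆ₗ[μ] g) x ∂μ = (∫⁻ x, f x ∂μ) * ∫⁻ x, g x ∂μ := by
  simp only [lconvolution_def]
  rw [lintegral_lintegral_swap (by fun_prop), ← lintegral_mul_const'' _ hf]
  refine lintegral_congr fun y => ?_
  have hgy : AEMeasurable (fun x => g (-y + x)) μ :=
    hg.comp_quasiMeasurePreserving (measurePreserving_add_left μ (-y)).quasiMeasurePreserving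
  rw [lintegral_const_mul'' (f y) hgy, lintegral_add_left_eq_self g (-y)]

/-- The two-sided Laplace transform of a nonnegative function, as a lower Lebesgue integral. -/
noncomputable def llaplace (f : ℝ → ℝ≥0∞) (s : ℝ) : ℝ≥0∞ :=
  ∫⁻ t, ENNReal.ofReal (exp (-s * t)) * f t

theorem exp_mul_lconvolution (f g : ℝ → ℝ≥0∞) (s : ℝ) :
    (fun t => ENNReal.ofReal (exp (-s * t)) * (f ⋆ₗ g) t) =
      (fun t => ENNReal.ofReal (exp (-s * t)) * f t) ⋆ₗ
        fun t => ENNReal.ofReal (exp (-s * t)) * g t := by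
  ext t
  simp only [lconvolution_def, ← lintegral_const_mul' _ _ ENNReal.ofReal_ne_top]
  refine lintegral_congr fun τ => ?_
  have hsplit : exp (-s * t) = exp (-s * τ) * exp (-s * (-τ + t)) := by
    rw [← exp_add]; ring_nf
  rw [hsplit, ENNReal.ofReal_mul (exp_pos _).le]
  ring

theorem llaplace_lconvolution {f g : ℝ → ℝ≥0∞} (hf : AEMeasurable f) (hg : AEMeasurable g)
    (s : ℝ) : llaplace (f ⋆ₗ g) s = llaplace f s * llaplace g s := by
  unfold llaplace
  rw [exp_mul_lconvolution, lintegral_lconvolution (by fun_prop) (by fun_prop)]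

theorem lconvolution_indicator_Ioi (f g : ℝ → ℝ≥0∞) (t : ℝ) :
    ((Ioi 0).indicator f ⋆ₗ (Ioi 0).indicator g) t = ∫⁻ τ in Ioo 0 t, f τ * g (t - τ) := by
  rw [lconvolution_def, ← lintegral_indicator measurableSet_Ioo]
  refine lintegral_congr fun τ => ?_
  by_cases hτ : τ ∈ Ioo 0 t
  · simp [hτ.1, hτ.2, neg_add_eq_sub]
  · rw [indicator_of_notMem hτ]
    rcases le_or_gt τ 0 with h | h
    · simp [h]
    · have : ¬ 0 < -τ + t := fun h' => hτ ⟨h, by linarith⟩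
      simp [this]

/-- Where the convolution is infinite, both sides are `0`: the Bochner integral of a
non-integrable function is `0` by convention. -/
theorem toReal_lconvolution_indicator_ofReal {φ ψ : ℝ → ℝ} (hφ : ContinuousOn φ (Ioi 0))
    (hψ : ContinuousOn ψ (Ioi 0)) (hφ₀ : ∀ t, 0 < t → 0 ≤ φ t) (hψ₀ : ∀ t, 0 < t → 0 ≤ ψ t)
    (t : ℝ) :
    (((Ioi 0).indicator (fun t => ENNReal.ofReal (φ t)) ⋆ₗ
        (Ioi 0).indicator fun t => ENNReal.ofReal (ψ t)) t).toReal =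
      ∫ τ in Ioo 0 t, φ τ * ψ (t - τ) := by
  have hmaps : MapsTo (fun τ => t - τ) (Ioo 0 t) (Ioi 0) := fun τ hτ => sub_pos.2 hτ.2
  rw [lconvolution_indicator_Ioi, integral_eq_lintegral_of_nonneg_ae]
  · refine congrArg ENNReal.toReal (setLIntegral_congr_fun measurableSet_Ioo fun τ hτ => ?_)
    rw [ENNReal.ofReal_mul (hφ₀ τ hτ.1)]
  · exact ae_restrict_of_forall_mem measurableSet_Ioo fun τ hτ =>
      mul_nonneg (hφ₀ τ hτ.1) (hψ₀ _ (hmaps hτ))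
  · exact ((hφ.mono fun τ hτ => hτ.1).mul (hψ.comp (by fun_prop) hmaps)).aestronglyMeasurable
      measurableSet_Ioo

theorem llaplace_indicator_ofReal {φ : ℝ → ℝ} (hφ₀ : ∀ t, 0 < t → 0 ≤ φ t) {s : ℝ}
    (hint : IntegrableOn (fun t => exp (-s * t) * φ t) (Ioi 0)) :
    llaplace ((Ioi 0).indicator fun t => ENNReal.ofReal (φ t)) s =
      ENNReal.ofReal (∫ t in Ioi 0, exp (-s * t) * φ t) := by
  rw [ofReal_integral_eq_lintegral_ofReal hint
    (ae_restrict_of_forall_mem measurableSet_Ioi fun t ht => mul_nonneg (exp_pos _).le (hφ₀ t ht)),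
    llaplace, ← lintegral_indicator measurableSet_Ioi]
  refine lintegral_congr fun t => ?_
  by_cases ht : t ∈ Ioi 0
  · simp [ht, ENNReal.ofReal_mul (exp_pos _).le]
  · simp [ht]

theorem ae_ne_top_of_llaplace_ne_top {f : ℝ → ℝ≥0∞} (hf : AEMeasurable f) {s : ℝ}
    (hfs : llaplace f s ≠ ∞) : ∀ᵐ t, f t ≠ ∞ := by
  filter_upwards [ae_lt_top' (by fun_prop) hfs] with t ht hft
  simp [hft, ENNReal.mul_top, exp_pos] at ht

theorem llaplace_eq_of_toReal_lconvolution_self_eq {f g : ℝ → ℝ≥0∞} (hf : AEMeasurable f)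
    (hg : AEMeasurable g) {s₀ : ℝ} (hf₀ : llaplace f s₀ ≠ ∞) (hg₀ : llaplace g s₀ ≠ ∞)
    (h : ∀ t, ((f ⋆ₗ f) t).toReal = ((g ⋆ₗ g) t).toReal) (s : ℝ) :
    llaplace f s = llaplace g s := by
  have hfin : ∀ {k : ℝ → ℝ≥0∞}, AEMeasurable k → llaplace k s₀ ≠ ∞ → ∀ᵐ t, (k ⋆ₗ k) t ≠ ∞ :=
    fun hk hk₀ => ae_ne_top_of_llaplace_ne_top (aemeasurable_lconvolution hk hk)
      (by rw [llaplace_lconvolution hk hk]; exact ENNReal.mul_ne_top hk₀ hk₀)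
  have hconv : f ⋆ₗ f =ᵐ[volume] g ⋆ₗ g := by
    filter_upwards [hfin hf hf₀, hfin hg hg₀] with t hft hgt
    exact (ENNReal.toReal_eq_toReal_iff' hft hgt).1 (h t)
  have hsq : llaplace f s ^ 2 = llaplace g s ^ 2 := by
    rw [sq, sq, ← llaplace_lconvolution hf hf, ← llaplace_lconvolution hg hg]
    exact lintegral_congr_ae (hconv.mono fun t ht => congrArg _ ht)
  exact (ENNReal.pow_right_strictMono two_ne_zero).injective hsq

section Moments

variable {a b : ℝ} {H : ℝ → ℝ}

theorem integral_eval_mul_eq_zero_of_moments (hH : IntegrableOn H (Icc a b))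
    (hmom : ∀ n : ℕ, ∫ x in Icc a b, x ^ n * H x = 0) (p : Polynomial ℝ) :
    ∫ x in Icc a b, p.eval x * H x = 0 := by
  have hint : ∀ n : ℕ, IntegrableOn (fun x => x ^ n * H x) (Icc a b) := fun n =>
    hH.continuousOn_mul (by fun_prop) isCompact_Icc
  simp_rw [Polynomial.eval_eq_sum_range, Finset.sum_mul, mul_assoc]
  rw [integral_finsetSum _ fun n _ => (hint n).const_mul _]
  simp [integral_const_mul, hmom]

theorem integral_mul_eq_zero_of_moments (hH : IntegrableOn H (Icc a b))
    (hmom : ∀ n : ℕ, ∫ x in Icc a b, x ^ n * H x = 0) {φ : ℝ → ℝ}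
    (hφ : ContinuousOn φ (Icc a b)) : ∫ x in Icc a b, φ x * H x = 0 := by
  refine eq_of_forall_dist_le fun ε hε => ?_
  set M := ∫ x in Icc a b, ‖H x‖
  obtain ⟨p, hp⟩ := exists_polynomial_near_of_continuousOn a b φ hφ (ε / (M + 1))
    (by positivity)
  have hdiff : ∫ x in Icc a b, φ x * H x = ∫ x in Icc a b, (φ x - p.eval x) * H x := by
    simp_rw [sub_mul]
    rw [integral_sub (hH.continuousOn_mul hφ isCompact_Icc)
      (hH.continuousOn_mul (Polynomial.continuousOn _) isCompact_Icc),
      integral_eval_mul_eq_zero_of_moments hH hmom, sub_zero]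
  calc dist (∫ x in Icc a b, φ x * H x) 0
      = ‖∫ x in Icc a b, (φ x - p.eval x) * H x‖ := by rw [dist_zero_right, hdiff]
    _ ≤ ∫ x in Icc a b, ε / (M + 1) * ‖H x‖ := by
      refine norm_integral_le_of_norm_le (hH.norm.const_mul _)
        (ae_restrict_of_forall_mem measurableSet_Icc fun x hx => ?_)
      rw [norm_mul, Real.norm_eq_abs, abs_sub_comm]
      gcongr
      exact (hp x hx).le
    _ = ε / (M + 1) * M := integral_const_mul _ _
    _ ≤ ε := by
      rw [div_mul_eq_mul_div, div_le_iff₀ (by positivity)]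
      nlinarith [(integral_nonneg fun x => norm_nonneg (H x) : 0 ≤ M)]

theorem ae_eq_zero_of_moments (hH : IntegrableOn H (Icc a b))
    (hmom : ∀ n : ℕ, ∫ x in Icc a b, x ^ n * H x = 0) :
    ∀ᵐ x ∂volume.restrict (Icc a b), H x = 0 := by
  have hind : ∀ᵐ x, (Icc a b).indicator H x = 0 := by
    refine ae_eq_zero_of_integral_contDiff_smul_eq_zero
      ((integrable_indicator_iff measurableSet_Icc).2 hH).locallyIntegrable fun φ hφ _ => ?_
    simp_rw [smul_eq_mul, ← indicator_mul_right]
    rw [integral_indicator measurableSet_Icc]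
    exact integral_mul_eq_zero_of_moments hH hmom hφ.continuous.continuousOn
  rw [ae_restrict_iff' measurableSet_Icc]
  filter_upwards [hind] with x hx hmem
  rwa [indicator_of_mem hmem] at hx

end Moments

section ExpNegSubstitution

theorem image_exp_neg_Ioi : (fun t => exp (-t)) '' Ioi 0 = Ioo 0 1 := by
  ext x
  constructor
  · rintro ⟨t, ht, rfl⟩
    exact ⟨exp_pos _, exp_lt_one_iff.2 (neg_lt_zero.2 ht)⟩
  · rintro ⟨hx₀, hx₁⟩
    exact ⟨-log x, neg_pos.2 (log_neg hx₀ hx₁), by simp [exp_log hx₀]⟩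

theorem hasDerivWithinAt_exp_neg (s : Set ℝ) (x : ℝ) :
    HasDerivWithinAt (fun t => exp (-t)) (-exp (-x)) s x := by
  simpa using ((hasDerivAt_neg x).exp).hasDerivWithinAt

theorem injOn_exp_neg (s : Set ℝ) : InjOn (fun t => exp (-t)) s :=
  fun _ _ _ _ h => neg_injective (exp_injective h)

theorem integral_Ioo_zero_one_eq_integral_exp_neg (G : ℝ → ℝ) :
    ∫ x in Ioo 0 1, G x = ∫ t in Ioi 0, exp (-t) * G (exp (-t)) := by
  rw [← image_exp_neg_Ioi, integral_image_eq_integral_abs_deriv_smul measurableSet_Ioi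
    (fun x _ => hasDerivWithinAt_exp_neg _ x) (injOn_exp_neg _)]
  simp [abs_of_pos (exp_pos _)]

theorem integrableOn_Ioo_zero_one_iff_exp_neg (G : ℝ → ℝ) :
    IntegrableOn G (Ioo 0 1) ↔ IntegrableOn (fun t => exp (-t) * G (exp (-t))) (Ioi 0) := by
  rw [← image_exp_neg_Ioi, integrableOn_image_iff_integrableOn_abs_deriv_smul measurableSet_Ioi
    (fun x _ => hasDerivWithinAt_exp_neg _ x) (injOn_exp_neg _)]
  simp [abs_of_pos (exp_pos _)]

end ExpNegSubstitution

theorem eqOn_zero_of_laplace_eq_zero {h : ℝ → ℝ} (hc : ContinuousOn h (Ioi 0))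
    (hint : ∀ s, 0 < s → IntegrableOn (fun t => exp (-s * t) * h t) (Ioi 0))
    (hzero : ∀ s, 0 < s → ∫ t in Ioi 0, exp (-s * t) * h t = 0) : EqOn h 0 (Ioi 0) := by
  set H : ℝ → ℝ := fun x => h (-log x)
  have hH : ∀ t, H (exp (-t)) = h t := fun t => by simp [H]
  have hmoment : ∀ (n : ℕ) (t : ℝ),
      exp (-t) * (exp (-t) ^ n * H (exp (-t))) = exp (-(n + 1) * t) * h t := fun n t => by
    rw [hH, ← mul_assoc, ← pow_succ', ← exp_nat_mul]
    push_cast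
    ring_nf
  have hHint : IntegrableOn H (Icc 0 1) := by
    rw [integrableOn_Icc_iff_integrableOn_Ioo, integrableOn_Ioo_zero_one_iff_exp_neg]
    simpa [hH] using hint 1 one_pos
  have hae : ∀ᵐ x ∂volume.restrict (Ioo 0 1), H x = 0 := by
    refine ae_restrict_of_ae_restrict_of_subset Ioo_subset_Icc_self
      (ae_eq_zero_of_moments hHint fun n => ?_)
    rw [integral_Icc_eq_integral_Ioo, integral_Ioo_zero_one_eq_integral_exp_neg]
    simpa only [hmoment] using hzero (n + 1) n.cast_add_one_pos
  have hHc : ContinuousOn H (Ioo 0 1) :=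
    hc.comp (continuousOn_log.mono fun x hx => hx.1.ne').neg
      fun x hx => neg_pos.2 (log_neg hx.1 hx.2)
  intro t ht
  have hmem : exp (-t) ∈ Ioo 0 1 := image_exp_neg_Ioi ▸ mem_image_of_mem _ ht
  rw [← hH]
  exact Measure.eqOn_open_of_ae_eq hae isOpen_Ioo hHc continuousOn_const hmem

theorem eqOn_of_laplace_eq {h₁ h₂ : ℝ → ℝ} (hc₁ : ContinuousOn h₁ (Ioi 0))
    (hc₂ : ContinuousOn h₂ (Ioi 0))
    (hint₁ : ∀ s, 0 < s → IntegrableOn (fun t => exp (-s * t) * h₁ t) (Ioi 0))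
    (hint₂ : ∀ s, 0 < s → IntegrableOn (fun t => exp (-s * t) * h₂ t) (Ioi 0))
    (heq : ∀ s, 0 < s →
      ∫ t in Ioi 0, exp (-s * t) * h₁ t = ∫ t in Ioi 0, exp (-s * t) * h₂ t) :
    EqOn h₁ h₂ (Ioi 0) := by
  have hzero := eqOn_zero_of_laplace_eq_zero (h := h₁ - h₂) (hc₁.sub hc₂)
    (fun s hs => by simp only [Pi.sub_apply, mul_sub]; exact (hint₁ s hs).sub (hint₂ s hs))
    (fun s hs => by
      simp only [Pi.sub_apply, mul_sub]
      rw [integral_sub (hint₁ s hs) (hint₂ s hs), heq s hs, sub_self])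
  exact fun t ht => sub_eq_zero.1 (hzero ht)

theorem selfconvolution_independent_of_point_general
    {Y : Type*} (F : ℝ → Y → ℝ)
    (hcont : ∀ y : Y, ContinuousOn (fun t => F t y) (Set.Ioi 0))
    (hpos : ∀ (y : Y) (t : ℝ), 0 < t → 0 ≤ F t y)
    (hint : ∀ (y : Y) (s : ℝ), 0 < s →
      IntegrableOn (fun t : ℝ => Real.exp (-s * t) * F t y) (Set.Ioi 0) volume)
    (γ : ℝ → ℝ)
    (hconv : ∀ (t : ℝ), 0 < t → ∀ y : Y,
      (∫ τ in Set.Ioo (0 : ℝ) t, F τ y * F (t - τ) y) = γ t) :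
    ∀ (t : ℝ), 0 < t → ∀ y₁ y₂ : Y, F t y₁ = F t y₂ := by
  intro t ht y₁ y₂
  set f : Y → ℝ → ℝ≥0∞ := fun y => (Ioi 0).indicator fun t => ENNReal.ofReal (F t y)
  have hf : ∀ y, AEMeasurable (f y) := fun y =>
    (aemeasurable_indicator_iff measurableSet_Ioi).2
      ((hcont y).aemeasurable measurableSet_Ioi).ennreal_ofReal
  have hlap : ∀ y s, 0 < s →
      llaplace (f y) s = ENNReal.ofReal (∫ t in Ioi 0, exp (-s * t) * F t y) :=
    fun y s hs => llaplace_indicator_ofReal (hpos y) (hint y s hs)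
  have hselfconv : ∀ u, ((f y₁ ⋆ₗ f y₁) u).toReal = ((f y₂ ⋆ₗ f y₂) u).toReal := by
    intro u
    simp only [f, toReal_lconvolution_indicator_ofReal (hcont _) (hcont _) (hpos _) (hpos _)]
    rcases lt_or_ge 0 u with hu | hu
    · rw [hconv u hu, hconv u hu]
    · simp [Ioo_eq_empty_of_le hu]
  refine eqOn_of_laplace_eq (hcont y₁) (hcont y₂) (hint y₁) (hint y₂) (fun s hs => ?_) ht
  have hlap_eq := llaplace_eq_of_toReal_lconvolution_self_eq (hf y₁) (hf y₂)
    (by rw [hlap y₁ 1 one_pos]; exact ENNReal.ofReal_ne_top)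
    (by rw [hlap y₂ 1 one_pos]; exact ENNReal.ofReal_ne_top) hselfconv s
  rwa [hlap y₁ s hs, hlap y₂ s hs, ENNReal.ofReal_eq_ofReal_iff
    (setIntegral_nonneg measurableSet_Ioi fun u hu => mul_nonneg (exp_pos _).le (hpos y₁ u hu))
    (setIntegral_nonneg measurableSet_Ioi fun u hu => mul_nonneg (exp_pos _).le (hpos y₂ u hu))]
    at hlap_eq

/-- If the self-convolution in time of `F(·, y)` is a function `γ(t)` independent of the
point `y`, and each `F(·,y)` is continuous, nonnegative, with convergent Laplace transform,
then `F(t, ·)` is constant in `y` for each `t > 0`. -/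
theorem selfconvolution_independent_of_point
    {Y : Type*} [Nonempty Y] (F : ℝ → Y → ℝ)
    (hcont : ∀ y : Y, ContinuousOn (fun t => F t y) (Set.Ioi 0))
    (hpos : ∀ (y : Y) (t : ℝ), 0 < t → 0 ≤ F t y)
    (hint : ∀ (y : Y) (s : ℝ), 0 < s →
      IntegrableOn (fun t : ℝ => Real.exp (-s * t) * F t y) (Set.Ioi 0) volume)
    (γ : ℝ → ℝ)
    (hconv : ∀ (t : ℝ), 0 < t → ∀ y : Y,
      (∫ τ in Set.Ioo (0 : ℝ) t, F τ y * F (t - τ) y) = γ t) :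
    ∀ (t : ℝ), 0 < t → ∀ y₁ y₂ : Y, F t y₁ = F t y₂ :=
  selfconvolution_independent_of_point_general F hcont hpos hint γ hconv
end
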